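/- arXiv:1703.07393 — 2 statements merged into one kernel-verified Lean document; each statement's English description precedes it below -/
import Mathlib

section
/- If the columns of [Z₁; Z₂] span an invariant subspace of the Hamiltonian matrix H = [[A, -M],[-C^T C, -A^T]] with H[Z₁;Z₂] = [Z₁;Z₂]Λ, and Z₁ is invertible, then X = Z₂ Z₁^{-1} solves the algebraic Riccati equation A^T X + X A + C^T C - X M X = 0. -/
open Matrix

/-! If `X Z₁ = Z₂`, the Riccati residual `Res X = AᵀX + XA + CᵀC - XMX` satisfies
`Res X * Z₁ = X (A Z₁ - M Z₂ - Z₁ Λ) - (-CᵀC Z₁ - Aᵀ Z₂ - Z₂ Λ)`, so the two block rows of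
`H [Z₁; Z₂] = [Z₁; Z₂] Λ` give `Res X * Z₁ = 0`; invertibility of `Z₁` cancels it. -/

/-- Here `B` plays the role of `Aᵀ`, `G` of `M` and `Q` of `CᵀC`. -/
theorem riccati_residual_mul_eq_zero {R : Type*} [Ring R] {A B G Q X Z₁ Z₂ Λ : R}
    (hX : X * Z₁ = Z₂) (h1 : A * Z₁ - G * Z₂ = Z₁ * Λ) (h2 : -Q * Z₁ - B * Z₂ = Z₂ * Λ) :
    (B * X + X * A + Q - X * G * X) * Z₁ = 0 := by
  have hXΛ : X * (Z₁ * Λ) = Z₂ * Λ := by rw [← mul_assoc, hX]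
  calc (B * X + X * A + Q - X * G * X) * Z₁
      = B * (X * Z₁) + X * (A * Z₁ - G * (X * Z₁)) + Q * Z₁ := by noncomm_ring
    _ = B * Z₂ + X * (Z₁ * Λ) + Q * Z₁ := by rw [hX, h1]
    _ = 0 := by rw [hXΛ, ← h2]; noncomm_ring

/-- If the columns of `[Z₁; Z₂]` span an invariant subspace of the Hamiltonian
`H = [[A, -M], [-CᵀC, -Aᵀ]]` (i.e. `A Z₁ - M Z₂ = Z₁ Λ` and `-CᵀC Z₁ - Aᵀ Z₂ = Z₂ Λ`)
with `Z₁` invertible, then `X = Z₂ Z₁⁻¹` solves the ARE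
`Aᵀ X + X A + Cᵀ C - X M X = 0`. -/
theorem hamiltonian_invariant_subspace_solves_ARE
    (n m : ℕ)
    (A M : Matrix (Fin n) (Fin n) ℝ) (C : Matrix (Fin m) (Fin n) ℝ)
    (Z₁ Z₂ Λ : Matrix (Fin n) (Fin n) ℝ)
    (h1 : A * Z₁ - M * Z₂ = Z₁ * Λ)
    (h2 : -(Cᵀ * C) * Z₁ - Aᵀ * Z₂ = Z₂ * Λ)
    (hZ : IsUnit Z₁) :
    Aᵀ * (Z₂ * Z₁⁻¹) + (Z₂ * Z₁⁻¹) * A + Cᵀ * C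
      - (Z₂ * Z₁⁻¹) * M * (Z₂ * Z₁⁻¹) = 0 := by
  have hX : Z₂ * Z₁⁻¹ * Z₁ = Z₂ :=
    nonsing_inv_mul_cancel_right Z₁ Z₂ ((isUnit_iff_isUnit_det Z₁).mp hZ)
  exact hZ.mul_left_eq_zero.mp (riccati_residual_mul_eq_zero hX h1 h2)
end

section
/- Let X̄ = Z_{2κ}(Z_{2κ}^T Z_{1κ})^{-1} Z_{2κ}^T with Z_{2κ}^T Z_{1κ} invertible. If X̄ is symmetric, then its residue R(X̄) := A^T X̄ + X̄ A + C₁^T C₁ - X̄ M X̄ satisfies R(X̄) = C̄₁^T C̄₁ where C̄₁^T = (I - Z_{2κ}(Z_{2κ}^T Z_{1κ})^{-1} Z_{1κ}^T) C₁^T, provided the columns of [Z_{1κ}; Z_{2κ}] span an invariant subspace of the Hamiltonian H with H[Z_{1κ}; Z_{2κ}] = [Z_{1κ}; Z_{2κ}]Λ_κ. -/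
/-!
Write `K = Z₂ᵀ Z₁` and `Π = Z₂ K⁻¹ Z₁ᵀ`. Since `X̄ Z₁ = Z₂`, the two Hamiltonian equations give
`R(X̄) Z₁ = 0`, hence `R(X̄) Πᵀ = 0` and, `R(X̄)` being symmetric, `R(X̄) = (I - Π) R(X̄) (I - Π)ᵀ`.
Moreover `X̄ Πᵀ = X̄ᵀ = X̄`, so `X̄ (I - Π)ᵀ = 0 = (I - Π) X̄`, and sandwiching kills every
term of `R(X̄)` containing `X̄`, leaving `(I - Π) C₁ᵀ C₁ (I - Π)ᵀ`.
-/

open Matrix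

namespace Matrix

variable {n k R : Type*} [Fintype n] [Fintype k] [CommRing R]

def riccatiResidue (A M Q X : Matrix n n R) : Matrix n n R :=
  Aᵀ * X + X * A + Q - X * M * X

theorem riccatiResidue_transpose {A M Q X : Matrix n n R} (hM : Mᵀ = M) (hQ : Qᵀ = Q)
    (hX : Xᵀ = X) : (riccatiResidue A M Q X)ᵀ = riccatiResidue A M Q X := by
  simp only [riccatiResidue, transpose_sub, transpose_add, transpose_mul, transpose_transpose,
    hM, hQ, hX, Matrix.mul_assoc]
  abel

/-- `h1`, `h2` say `H [Z₁; Z₂] = [Z₁; Z₂] Λ` for the Hamiltonian `H = [[A, -M], [-Q, -Aᵀ]]`. -/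
theorem riccatiResidue_mul_eq_zero {A M Q X : Matrix n n R} {Z₁ Z₂ : Matrix n k R}
    {Λ : Matrix k k R} (h1 : A * Z₁ - M * Z₂ = Z₁ * Λ) (h2 : -Q * Z₁ - Aᵀ * Z₂ = Z₂ * Λ)
    (hXZ : X * Z₁ = Z₂) : riccatiResidue A M Q X * Z₁ = 0 := by
  calc riccatiResidue A M Q X * Z₁
      = Aᵀ * (X * Z₁) + X * (A * Z₁ - M * (X * Z₁)) + Q * Z₁ := by
        simp only [riccatiResidue, Matrix.sub_mul, Matrix.add_mul, Matrix.mul_sub,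
          Matrix.mul_assoc]
        abel
    _ = -(-Q * Z₁ - Aᵀ * Z₂ - Z₂ * Λ) := by
        rw [hXZ, h1, ← Matrix.mul_assoc, hXZ, Matrix.neg_mul]
        abel
    _ = 0 := by rw [h2, sub_self, neg_zero]

theorem riccatiResidue_eq_conj [DecidableEq n] {A M Q X P : Matrix n n R} (hM : Mᵀ = M)
    (hQ : Qᵀ = Q) (hX : Xᵀ = X) (hXP : X * Pᵀ = X) (hRP : riccatiResidue A M Q X * Pᵀ = 0) :
    riccatiResidue A M Q X = (1 - P) * Q * (1 - P)ᵀ := by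
  set Rₓ := riccatiResidue A M Q X
  have hRsymm : Rₓᵀ = Rₓ := riccatiResidue_transpose hM hQ hX
  have hXright : X * (1 - P)ᵀ = 0 := by
    rw [transpose_sub, transpose_one, Matrix.mul_sub, Matrix.mul_one, hXP, sub_self]
  have hXleft : (1 - P) * X = 0 := by
    rw [← hX, ← transpose_transpose (1 - P), ← transpose_mul, hXright, transpose_zero]
  have hPR : P * Rₓ = 0 := by
    rw [← transpose_transpose P, ← hRsymm, ← transpose_mul, hRP, transpose_zero]
  have hconj : Rₓ = (1 - P) * Rₓ * (1 - P)ᵀ := by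
    rw [transpose_sub, transpose_one, Matrix.sub_mul, Matrix.one_mul, hPR, sub_zero,
      Matrix.mul_sub, Matrix.mul_one, hRP, sub_zero]
  generalize 1 - P = E at hconj hXright hXleft ⊢
  calc Rₓ = E * Aᵀ * (X * Eᵀ) + E * Q * Eᵀ + (E * X) * A * Eᵀ - (E * X) * M * (X * Eᵀ) := by
        rw [hconj]
        simp only [Rₓ, riccatiResidue, Matrix.mul_add, Matrix.mul_sub, Matrix.add_mul,
          Matrix.sub_mul, Matrix.mul_assoc]
        abel
    _ = E * Q * Eᵀ := by
        rw [hXright, hXleft]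
        simp

end Matrix

/-- Residue formula for the Hamiltonian-based approximate ARE solution
`X̄ = Z₂κ (Z₂κᵀ Z₁κ)⁻¹ Z₂κᵀ` (Lemma 2 of the paper): if the columns of
`[Z₁κ; Z₂κ]` span an invariant subspace of the Hamiltonian and `X̄` is symmetric,
then `Aᵀ X̄ + X̄ A + C₁ᵀ C₁ - X̄ M X̄ = C̄₁ᵀ C̄₁` with
`C̄₁ᵀ = (I - Z₂κ (Z₂κᵀ Z₁κ)⁻¹ Z₁κᵀ) C₁ᵀ`. -/
theorem approximate_ARE_residue
    (n m κ : ℕ)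
    (A M : Matrix (Fin n) (Fin n) ℝ) (hM : Mᵀ = M)
    (C₁ : Matrix (Fin m) (Fin n) ℝ)
    (Z₁κ Z₂κ : Matrix (Fin n) (Fin κ) ℝ) (Λκ : Matrix (Fin κ) (Fin κ) ℝ)
    (h1 : A * Z₁κ - M * Z₂κ = Z₁κ * Λκ)
    (h2 : -(C₁ᵀ * C₁) * Z₁κ - Aᵀ * Z₂κ = Z₂κ * Λκ)
    (hZ : IsUnit (Z₂κᵀ * Z₁κ))
    (Xbar : Matrix (Fin n) (Fin n) ℝ)
    (hX : Xbar = Z₂κ * (Z₂κᵀ * Z₁κ)⁻¹ * Z₂κᵀ)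
    (hsym : Xbarᵀ = Xbar) :
    Aᵀ * Xbar + Xbar * A + C₁ᵀ * C₁ - Xbar * M * Xbar =
      ((1 - Z₂κ * (Z₂κᵀ * Z₁κ)⁻¹ * Z₁κᵀ) * C₁ᵀ) *
        ((1 - Z₂κ * (Z₂κᵀ * Z₁κ)⁻¹ * Z₁κᵀ) * C₁ᵀ)ᵀ := by
  set S := (Z₂κᵀ * Z₁κ)⁻¹
  have hSK : S * (Z₂κᵀ * Z₁κ) = 1 := nonsing_inv_mul _ ((isUnit_iff_isUnit_det _).mp hZ)
  have hXZ : Xbar * Z₁κ = Z₂κ := by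
    simp only [hX, Matrix.mul_assoc, hSK, Matrix.mul_one]
  have hXP : Xbar * (Z₂κ * S * Z₁κᵀ)ᵀ = Xbar := by
    rw [transpose_mul, transpose_mul, transpose_transpose, ← Matrix.mul_assoc,
      ← Matrix.mul_assoc, hXZ, ← hsym, hX, transpose_mul, transpose_mul, transpose_transpose,
      Matrix.mul_assoc]
  have hRZ : riccatiResidue A M (C₁ᵀ * C₁) Xbar * Z₁κ = 0 :=
    riccatiResidue_mul_eq_zero h1 h2 hXZ
  have hRP : riccatiResidue A M (C₁ᵀ * C₁) Xbar * (Z₂κ * S * Z₁κᵀ)ᵀ = 0 := by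
    rw [transpose_mul, transpose_transpose, ← Matrix.mul_assoc, hRZ, Matrix.zero_mul]
  have hres := riccatiResidue_eq_conj hM (by rw [transpose_mul, transpose_transpose]) hsym hXP hRP
  rw [riccatiResidue] at hres
  rw [hres, transpose_mul, transpose_transpose]
  simp only [Matrix.mul_assoc]
end
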